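/- For each 0≤m≤n and each set W of type m, the class of blow-up limits is complete under iteration: 𝒜(𝒜(W))=𝒜(W), where 𝒜(𝒜(W))=∪_{X∈𝒜(W)}𝒜(X). -/

import Mathlib

open Metric Set
open scoped Classical

noncomputable section

namespace DDTGen

variable {V : Type*} [NormedAddCommGroup V] [InnerProductSpace ℝ V]

/-- The cone over a finite set `X ⊆ V`: all nonnegative linear combinations of
elements of `X`.  For `X = ∅` this is `{0}`. -/
def coneOf (X : Finset V) : Set V :=
  {y | ∃ c : V → ℝ, (∀ v ∈ X, 0 ≤ c v) ∧ y = ∑ v ∈ X, c v • v}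

/-- `X` is the base of a simple cone of dimension `m`: `X` consists of `m` unit
vectors and `{0} ∪ X` is affinely independent. -/
def IsSimpleBase (m : ℕ) (X : Finset V) : Prop :=
  X.card = m ∧ (∀ v ∈ X, ‖v‖ = 1) ∧
    AffineIndependent ℝ (Subtype.val : (insert (0 : V) (X : Set V) : Set V) → V)

/-- A complex cone of dimension `m`: a finite union of distinct simple cones of
dimension `m` such that any two faces intersect in the common sub-face. -/
structure ComplexCone (V : Type*) [NormedAddCommGroup V] [InnerProductSpace ℝ V]
    (m : ℕ) where
  faces : Finset (Finset V)
  faces_nonempty : faces.Nonempty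
  simple : ∀ X ∈ faces, IsSimpleBase m X
  inter_eq : ∀ X Y : Finset V, (∃ X' ∈ faces, X ⊆ X') → (∃ Y' ∈ faces, Y ⊆ Y') →
    coneOf X ∩ coneOf Y = coneOf (X ∩ Y)

namespace ComplexCone

variable {m : ℕ}

/-- membership in `Ω_T`. -/
def inOmega (T : ComplexCone V m) (Y : Finset V) : Prop :=
  ∃ X ∈ T.faces, Y ⊆ X

/-- the underlying set of the complex cone. -/
def carrier (T : ComplexCone V m) : Set V :=
  ⋃ X ∈ T.faces, coneOf X

end ComplexCone

/-- The set of angles `∠(F₁,F₂)` of the paper: angles `∠ f₁ z f₂` with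
`z ∈ C(F₁ ∩ F₂)`, `f_j ∈ C(F_j) \ C(F₁ ∩ F₂)` realizing the distance to
`C(F₁ ∩ F₂)` at `z`. -/
def angleSet (F₁ F₂ : Finset V) : Set ℝ :=
  {θ | ∃ z ∈ coneOf (F₁ ∩ F₂),
      ∃ f₁ ∈ coneOf F₁ \ coneOf (F₁ ∩ F₂),
      ∃ f₂ ∈ coneOf F₂ \ coneOf (F₁ ∩ F₂),
      Metric.infDist f₁ (coneOf (F₁ ∩ F₂)) = dist f₁ z ∧
      Metric.infDist f₂ (coneOf (F₁ ∩ F₂)) = dist f₂ z ∧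
      θ = EuclideanGeometry.angle f₁ z f₂}

/-- the non-flat condition for a complex cone. -/
def ComplexCone.NonFlat {m : ℕ} (T : ComplexCone V m) : Prop :=
  ∀ Y Z₁ Z₂ : Finset V, T.inOmega Y → T.inOmega Z₁ → T.inOmega Z₂ →
    Y.card < m → Y = Z₁ ∩ Z₂ → Z₁.card = Y.card + 1 → Z₂.card = Y.card + 1 →
    sSup (angleSet Z₁ Z₂) < Real.pi

/-- the minimal angle `∠(T)` of a complex cone. -/
def ComplexCone.minAngle {m : ℕ} (T : ComplexCone V m) : ℝ :=
  sInf {θ | ∃ F₁ F₂ : Finset V, T.inOmega F₁ ∧ T.inOmega F₂ ∧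
    F₁.Nonempty ∧ F₂.Nonempty ∧ ¬F₁ ⊆ F₂ ∧ ¬F₂ ⊆ F₁ ∧ θ = sInf (angleSet F₁ F₂)}

/-- relative interior of a (convex) set, following the paper's definition. -/
def relInterior (F : Set V) : Set V :=
  {x | x ∈ F ∧ ∃ r > 0, (affineSpan ℝ F : Set V) ∩ Metric.ball x r ⊆ F}

/-- `RI m T`: points of `T` near which `T` coincides with an `m`-dimensional
affine plane. -/
def RI (m : ℕ) (T : Set V) : Set V :=
  {x | x ∈ T ∧ ∃ r > 0, ∃ Q : AffineSubspace ℝ V, (Q : Set V).Nonempty ∧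
      Module.finrank ℝ Q.direction = m ∧
      T ∩ Metric.ball x r = (Q : Set V) ∩ Metric.ball x r}

/-- `π` is the orthogonal (nearest point) projection onto the affine subspace `P`. -/
def IsOrthProjOnto (P : AffineSubspace ℝ V) (π : V →ᵃ[ℝ] V) : Prop :=
  (∀ y, π y ∈ P) ∧ (∀ p ∈ P, π p = p) ∧
    ∀ y : V, ∀ p ∈ P, inner ℝ (y - π y) (p - π y) = (0 : ℝ)

/-- normalized local Hausdorff distance `d_{x,r}(F₁,F₂)`. -/
def dxr {X : Type*} [PseudoMetricSpace X] (x : X) (r : ℝ) (F₁ F₂ : Set X) : ℝ :=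
  (1 / r) * max (⨆ z ∈ F₂ ∩ Metric.ball x r, Metric.infDist z F₁)
                (⨆ z ∈ F₁ ∩ Metric.ball x r, Metric.infDist z F₂)

/-- the blow-up cone `C(W ∩ B(x,r) − x)`. -/
def blowUp (W : Set V) (x : V) (r : ℝ) : Set V :=
  {y | ∃ c : ℝ, 0 ≤ c ∧ ∃ z ∈ W ∩ Metric.ball x r, y = c • (z - x)}

/-- projection of `ℝ^N` onto the first `N'` coordinates. -/
def proj1 (N' N : ℕ) (y : EuclideanSpace ℝ (Fin N)) : EuclideanSpace ℝ (Fin N') :=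
  WithLp.toLp 2 (fun j : Fin N' => if h : (j : ℕ) < N then y ⟨(j : ℕ), h⟩ else 0)

/-- the set `T × ℝ^m × {0}` inside `ℝ^N`, where `T ⊆ ℝ^{N'}` occupies the first
`N'` coordinates, the `ℝ^m` factor the next `m` coordinates, and the remaining
coordinates vanish. -/
def prodSet (N' N : ℕ) (T : Set (EuclideanSpace ℝ (Fin N'))) (m : ℕ) :
    Set (EuclideanSpace ℝ (Fin N)) :=
  {y | proj1 N' N y ∈ T ∧ ∀ i : Fin N, N' + m ≤ (i : ℕ) → y i = 0}

/-- data describing a set of type `m` in `ℝ^N`: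
`W = R (T × ℝ^m × {0})` with `T` a non-flat complex cone of dimension `n−m`
and `R` an isometry of `ℝ^N`. -/
structure TypedCone (n N' N : ℕ) where
  m : ℕ
  m_le : m ≤ n
  T : ComplexCone (EuclideanSpace ℝ (Fin N')) (n - m)
  nonflat : T.NonFlat
  R : EuclideanSpace ℝ (Fin N) ≃ᵢ EuclideanSpace ℝ (Fin N)

namespace TypedCone

variable {n N' N : ℕ}

/-- the underlying set `R (T × ℝ^m × {0})`. -/
def carrier (C : TypedCone n N' N) : Set (EuclideanSpace ℝ (Fin N)) :=
  C.R '' prodSet N' N C.T.carrier C.m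

/-- the `d`-dimensional spine `L^d(W)`. -/
def spine (C : TypedCone n N' N) (d : ℕ) : Set (EuclideanSpace ℝ (Fin N)) :=
  if d < C.m then ∅
  else C.R '' prodSet N' N
    (⋃ Y ∈ {Y : Finset (EuclideanSpace ℝ (Fin N')) |
        C.T.inOmega Y ∧ Y.card = d - C.m}, coneOf Y) C.m

/-- `L` is a branch of the `d`-dimensional spine of `C`. -/
def IsBranch (C : TypedCone n N' N) (d : ℕ) (L : Set (EuclideanSpace ℝ (Fin N))) : Prop :=
  C.m ≤ d ∧ ∃ Y : Finset (EuclideanSpace ℝ (Fin N')),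
    C.T.inOmega Y ∧ Y.card = d - C.m ∧ L = C.R '' prodSet N' N (coneOf Y) C.m

end TypedCone

/-- `W` is a set of type `m` in `ℝ^N`. -/
def IsTypeM (n N' N m : ℕ) (W : Set (EuclideanSpace ℝ (Fin N))) : Prop :=
  m ≤ n ∧ ∃ C : TypedCone n N' N, C.m = m ∧ C.carrier = W

/-- `𝒯𝒜`: all sets of type `m`, `0 ≤ m ≤ n`. -/
def TA (n N' N : ℕ) : Set (Set (EuclideanSpace ℝ (Fin N))) :=
  {W | ∃ m, IsTypeM n N' N m W}

/-- `𝒜(W)`: all isometric images of (stabilized) blow-up cones of `W`. -/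
def calA {N : ℕ} (W : Set (EuclideanSpace ℝ (Fin N))) :
    Set (Set (EuclideanSpace ℝ (Fin N))) :=
  {Z | ∃ R : EuclideanSpace ℝ (Fin N) ≃ᵢ EuclideanSpace ℝ (Fin N),
      ∃ x ∈ W, ∃ r : ℝ, 0 < r ∧
        (∀ r' : ℝ, 0 < r' → r' ≤ r → blowUp W x r' = blowUp W x r) ∧
        Z = R '' blowUp W x r}

/-- `𝒜(ℬ) = ∪_{W ∈ ℬ} 𝒜(W)`. -/
def calAB {N : ℕ} (ℬ : Set (Set (EuclideanSpace ℝ (Fin N)))) :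
    Set (Set (EuclideanSpace ℝ (Fin N))) :=
  ⋃ W ∈ ℬ, calA W

/-- `W₁ ∼ W₂` iff they differ by an isometry of `ℝ^N`. -/
def EquivIso {N : ℕ} (W₁ W₂ : Set (EuclideanSpace ℝ (Fin N))) : Prop :=
  ∃ R : EuclideanSpace ℝ (Fin N) ≃ᵢ EuclideanSpace ℝ (Fin N), W₁ = R '' W₂

/-- `ℬ/∼` is finite: `ℬ` is covered by finitely many isometry classes. -/
def FiniteModIso {N : ℕ} (ℬ : Set (Set (EuclideanSpace ℝ (Fin N)))) : Prop :=
  ∃ S : Set (Set (EuclideanSpace ℝ (Fin N))), S.Finite ∧ ∀ W ∈ ℬ, ∃ W₀ ∈ S, EquivIso W W₀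

/-- the minimal angle constant `α(ℬ)`. -/
def alphaB (n N' N : ℕ) (ℬ : Set (Set (EuclideanSpace ℝ (Fin N)))) : ℝ :=
  sInf {a | ∃ C : TypedCone n N' N, C.carrier ∈ calAB ℬ ∧ a = C.T.minAngle}

/-- `δ₀` is a cone-separation constant for `ℬ` (Proposition 2.10). -/
def SepConst (n N' N : ℕ) (ℬ : Set (Set (EuclideanSpace ℝ (Fin N)))) (δ₀ : ℝ) : Prop :=
  0 < δ₀ ∧ ∀ t : ℕ, t ≤ n - 1 →
    ∀ C : TypedCone n N' N, C.carrier ∈ calAB ℬ → C.m ≤ t →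
    ∀ x ∈ C.spine t, ∀ W ∈ calAB ℬ,
      (∃ k, t + 1 ≤ k ∧ k ≤ n ∧ IsTypeM n N' N k W) →
      ∀ r : ℝ, 0 < r → dxr x r C.carrier W > δ₀

/-- `n₀` is a cone-replacement constant for `ℬ` (Proposition 2.11). -/
def RepConst (n N' N : ℕ) (ℬ : Set (Set (EuclideanSpace ℝ (Fin N)))) (n₀ : ℝ) : Prop :=
  10 < n₀ ∧ ∀ t : ℕ, t ≤ n - 1 →
    ∀ C : TypedCone n N' N, C.carrier ∈ calAB ℬ → C.m ≤ t →
    ∀ (x : EuclideanSpace ℝ (Fin N)) (r : ℝ), 0 < r →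
      (C.carrier ∩ Metric.ball x r).Nonempty →
      Metric.ball x (n₀ * r) ∩ C.spine t = ∅ →
      ∃ Y ∈ calAB ℬ, (∃ u, t + 1 ≤ u ∧ u ≤ n ∧ IsTypeM n N' N u Y) ∧
        C.carrier ∩ Metric.ball x r = Y ∩ Metric.ball x r

/-- `a_m(x,r)`: the infimum of `d_{x,r}(E,W)` over sets `W ∈ 𝒜(ℬ)` of type `m`
whose `m`-spine passes through `x`. -/
def aM (n N' N : ℕ) (ℬ : Set (Set (EuclideanSpace ℝ (Fin N))))
    (E : Set (EuclideanSpace ℝ (Fin N))) (m : ℕ)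
    (x : EuclideanSpace ℝ (Fin N)) (r : ℝ) : ℝ :=
  sInf {d | ∃ C : TypedCone n N' N, C.m = m ∧ C.carrier ∈ calAB ℬ ∧ x ∈ C.spine m ∧
      d = dxr x r E C.carrier}

/-- the stratum `E_m`. -/
def Estrat (n N' N : ℕ) (ℬ : Set (Set (EuclideanSpace ℝ (Fin N))))
    (E : Set (EuclideanSpace ℝ (Fin N))) (C₀ ε : ℝ) (m : ℕ) :
    Set (EuclideanSpace ℝ (Fin N)) :=
  {x | x ∈ E ∩ Metric.ball 0 2 ∧
      ∃ rx > 0, ∀ r : ℝ, 0 < r → r < rx → aM n N' N ℬ E m x r < C₀ * ε}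

end DDTGen

/-!
A set of type `m` is an isometric image of a finite union of polyhedral cones. Such a set `K` is
locally conic: near each point `p` it coincides with `p + T` for a cone `T` which is again a finite
union of polyhedral cones, and the blow-ups of `K` at `p` stabilise to `T`; so `𝒜(K)` consists of
the isometric images of these tangent cones. A tangent cone `T'` of a tangent cone `T` is itself a
tangent cone of `K`, by homogeneity of `T`, which gives `𝒜(𝒜(K)) ⊆ 𝒜(K)`. Conversely every cone is
its own blow-up at its vertex.
-/

namespace DDTGen

open Filter Topology

section Cone

variable {V : Type*} [AddCommGroup V] [Module ℝ V]

def IsCone (A : Set V) : Prop :=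
  ∀ c : ℝ, 0 ≤ c → ∀ a ∈ A, c • a ∈ A

theorem IsCone.smul_mem_iff {A : Set V} (hA : IsCone A) {c : ℝ} (hc : 0 < c) {a : V} :
    c • a ∈ A ↔ a ∈ A := by
  refine ⟨fun h => ?_, hA c hc.le a⟩
  simpa [smul_smul, inv_mul_cancel₀ hc.ne'] using hA c⁻¹ (inv_nonneg.2 hc.le) _ h

end Cone

section LocalCone

variable {V : Type*} [NormedAddCommGroup V] [NormedSpace ℝ V]

def IsLocalConeAt (K : Set V) (p : V) (T : Set V) : Prop :=
  IsCone T ∧ ∀ᶠ v in 𝓝 0, p + v ∈ K ↔ v ∈ T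

theorem exists_pos_norm_smul_lt (y : V) {r : ℝ} (hr : 0 < r) : ∃ t : ℝ, 0 < t ∧ ‖t • y‖ < r := by
  obtain ⟨t, ht, hty⟩ := exists_pos_mul_lt hr ‖y‖
  exact ⟨t, ht, by rwa [norm_smul, Real.norm_of_nonneg ht.le, mul_comm]⟩

theorem IsCone.isLocalConeAt_zero {A : Set V} (hA : IsCone A) : IsLocalConeAt A 0 A :=
  ⟨hA, by simp⟩

theorem IsLocalConeAt.mem_iff {K T : Set V} {p : V} (h : IsLocalConeAt K p T) :
    p ∈ K ↔ (0 : V) ∈ T := by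
  simpa using h.2.self_of_nhds

theorem IsLocalConeAt.exists_radius {K T : Set V} {p : V} (h : IsLocalConeAt K p T) :
    ∃ r > 0, ∀ v : V, ‖v‖ < r → (p + v ∈ K ↔ v ∈ T) := by
  simpa only [Metric.eventually_nhds_iff, dist_zero_right] using h.2

theorem isLocalConeAt_of_radius {K T : Set V} {p : V} (hT : IsCone T) {r : ℝ} (hr : 0 < r)
    (h : ∀ v : V, ‖v‖ < r → (p + v ∈ K ↔ v ∈ T)) : IsLocalConeAt K p T :=
  ⟨hT, Metric.eventually_nhds_iff.2 ⟨r, hr, fun v hv => h v (by simpa using hv)⟩⟩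

/-- The point is `p + ε • q` for small `ε > 0`: near it `K` looks like `T` near `ε • q`,
which by homogeneity looks like `T` near `q`. -/
theorem IsLocalConeAt.exists_shift {K T T' : Set V} {p q : V} (hK : IsLocalConeAt K p T)
    (hT : IsLocalConeAt T q T') : ∃ x, IsLocalConeAt K x T' := by
  obtain ⟨r, hr, hKr⟩ := hK.exists_radius
  obtain ⟨s, hs, hTs⟩ := hT.exists_radius
  obtain ⟨ε, hε, hεr⟩ := exists_pos_mul_lt hr (‖q‖ + s)
  refine ⟨p + ε • q, isLocalConeAt_of_radius hT.1 (mul_pos hε hs) fun v hv => ?_⟩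
  have hεv : ‖ε⁻¹ • v‖ < s := by
    rw [norm_smul, Real.norm_of_nonneg (inv_nonneg.2 hε.le), inv_mul_lt_iff₀ hε]
    linarith
  have hqv : ‖ε • q + v‖ < r := by
    calc ‖ε • q + v‖ ≤ ε * ‖q‖ + ‖v‖ := by
          simpa [norm_smul, Real.norm_of_nonneg hε.le] using norm_add_le (ε • q) v
      _ < (‖q‖ + s) * ε := by linarith
      _ < r := hεr
  calc p + ε • q + v ∈ K ↔ ε • q + v ∈ T := by rw [add_assoc]; exact hKr _ hqv
    _ ↔ ε • (q + ε⁻¹ • v) ∈ T := by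
        rw [smul_add, smul_smul, mul_inv_cancel₀ hε.ne', one_smul]
    _ ↔ ε⁻¹ • v ∈ T' := (hK.1.smul_mem_iff hε).trans (hTs _ hεv)
    _ ↔ v ∈ T' := hT.1.smul_mem_iff (inv_pos.2 hε)

theorem IsLocalConeAt.sUnion {S : Set (Set V)} (hS : S.Finite) (hclosed : ∀ P ∈ S, IsClosed P)
    {p : V} {T : Set V → Set V} (hT : ∀ P ∈ S, p ∈ P → IsLocalConeAt P p (T P)) :
    IsLocalConeAt (⋃₀ S) p (⋃₀ (T '' {P ∈ S | p ∈ P})) := by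
  refine ⟨?_, ?_⟩
  · rintro c hc a ⟨_, ⟨P, ⟨hP, hpP⟩, rfl⟩, ha⟩
    exact ⟨T P, ⟨P, ⟨hP, hpP⟩, rfl⟩, (hT P hP hpP).1 c hc a ha⟩
  have hpiece : ∀ P ∈ S, ∀ᶠ v in 𝓝 (0 : V), p + v ∈ P ↔ p ∈ P ∧ v ∈ T P := by
    intro P hP
    by_cases hpP : p ∈ P
    · simpa [hpP] using (hT P hP hpP).2
    · have hlim : Tendsto (fun v : V => p + v) (𝓝 0) (𝓝 p) := by
        simpa using tendsto_const_nhds.add (tendsto_id (x := 𝓝 (0 : V)))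
      filter_upwards [hlim.eventually ((hclosed P hP).isOpen_compl.mem_nhds hpP)] with v hv
      simp only [hpP, false_and, iff_false]
      exact hv
  filter_upwards [hS.eventually_all.2 hpiece] with v hv
  simp only [Set.mem_sUnion, Set.sUnion_image, Set.mem_iUnion, Set.mem_ofPred_eq, exists_prop]
  constructor
  · rintro ⟨P, hP, hpv⟩
    exact ⟨P, ⟨hP, ((hv P hP).1 hpv).1⟩, ((hv P hP).1 hpv).2⟩
  · rintro ⟨P, ⟨hP, hpP⟩, hvT⟩
    exact ⟨P, hP, (hv P hP).2 ⟨hpP, hvT⟩⟩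

end LocalCone

section BlowUp

variable {V : Type*} [NormedAddCommGroup V] [InnerProductSpace ℝ V]

theorem isCone_blowUp (W : Set V) (x : V) (r : ℝ) : IsCone (blowUp W x r) := by
  rintro c hc _ ⟨c', hc', z, hz, rfl⟩
  exact ⟨c * c', mul_nonneg hc hc', z, hz, smul_smul c c' _⟩

theorem zero_mem_blowUp {W : Set V} {x : V} (hx : x ∈ W) {r : ℝ} (hr : 0 < r) :
    (0 : V) ∈ blowUp W x r :=
  ⟨0, le_rfl, x, ⟨hx, Metric.mem_ball_self hr⟩, (zero_smul ℝ _).symm⟩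

theorem IsLocalConeAt.exists_blowUp_eq {K T : Set V} {p : V} (h : IsLocalConeAt K p T) :
    ∃ ρ > 0, ∀ r, 0 < r → r ≤ ρ → blowUp K p r = T := by
  obtain ⟨ρ, hρ, hKρ⟩ := h.exists_radius
  refine ⟨ρ, hρ, fun r hr hrρ => Set.Subset.antisymm ?_ fun y hy => ?_⟩
  · rintro _ ⟨c, hc, z, ⟨hzK, hzr⟩, rfl⟩
    rw [Metric.mem_ball, dist_eq_norm] at hzr
    exact h.1 c hc _ ((hKρ _ (hzr.trans_le hrρ)).1 (by rwa [add_sub_cancel]))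
  · obtain ⟨t, ht, hty⟩ := exists_pos_norm_smul_lt y hr
    refine ⟨t⁻¹, inv_nonneg.2 ht.le, p + t • y, ⟨?_, ?_⟩, ?_⟩
    · exact (hKρ _ (hty.trans_le hrρ)).2 (h.1 t ht.le y hy)
    · rwa [Metric.mem_ball, dist_eq_norm, add_sub_cancel_left]
    · rw [add_sub_cancel_left, smul_smul, inv_mul_cancel₀ ht.ne', one_smul]

theorem IsLocalConeAt.blowUp_eq_of_stable {K T : Set V} {p : V} (h : IsLocalConeAt K p T)
    {r : ℝ} (hr : 0 < r) (hstable : ∀ r', 0 < r' → r' ≤ r → blowUp K p r' = blowUp K p r) :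
    blowUp K p r = T := by
  obtain ⟨ρ, hρ, hblow⟩ := h.exists_blowUp_eq
  rw [← hstable _ (lt_min hr hρ) (min_le_left r ρ)]
  exact hblow _ (lt_min hr hρ) (min_le_right r ρ)

theorem blowUp_image (f : V ≃ᵢ V) (S : Set V) (x : V) (r : ℝ) :
    blowUp (f '' S) (f x) r = f.toRealLinearIsometryEquiv '' blowUp S x r := by
  have hf : ∀ z, f z - f x = f.toRealLinearIsometryEquiv (z - x) := fun z => by
    rw [map_sub, f.toRealLinearIsometryEquiv_apply, f.toRealLinearIsometryEquiv_apply]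
    abel
  ext y
  constructor
  · rintro ⟨c, hc, _, ⟨⟨z, hz, rfl⟩, hzr⟩, rfl⟩
    refine ⟨c • (z - x), ⟨c, hc, z, ⟨hz, ?_⟩, rfl⟩, by rw [map_smul, hf]⟩
    rwa [Metric.mem_ball, ← f.dist_eq]
  · rintro ⟨_, ⟨c, hc, z, ⟨hz, hzr⟩, rfl⟩, rfl⟩
    refine ⟨c, hc, f z, ⟨Set.mem_image_of_mem f hz, ?_⟩, by rw [map_smul, hf]⟩
    rwa [Metric.mem_ball, f.dist_eq]

end BlowUp

section Polyhedral

variable {V V' : Type*} [AddCommGroup V] [Module ℝ V] [AddCommGroup V'] [Module ℝ V']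

def IsPolyhedralCone (P : Set V) : Prop :=
  ∃ (L : Submodule ℝ V) (s : Set (V →ₗ[ℝ] ℝ)), s.Finite ∧ P = {v | v ∈ L ∧ ∀ ℓ ∈ s, 0 ≤ ℓ v}

theorem IsPolyhedralCone.submodule (L : Submodule ℝ V) : IsPolyhedralCone (L : Set V) :=
  ⟨L, ∅, Set.finite_empty, by ext; simp⟩

theorem IsPolyhedralCone.inter {P Q : Set V} (hP : IsPolyhedralCone P)
    (hQ : IsPolyhedralCone Q) : IsPolyhedralCone (P ∩ Q) := by
  obtain ⟨L, s, hs, rfl⟩ := hP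
  obtain ⟨L', s', hs', rfl⟩ := hQ
  exact ⟨L ⊓ L', s ∪ s', hs.union hs', by ext; simp [or_imp, forall_and]; tauto⟩

theorem IsPolyhedralCone.preimage {P : Set V'} (hP : IsPolyhedralCone P) (π : V →ₗ[ℝ] V') :
    IsPolyhedralCone (π ⁻¹' P) := by
  obtain ⟨L, s, hs, rfl⟩ := hP
  exact ⟨L.comap π, (· ∘ₗ π) '' s, hs.image _, by ext; simp⟩

theorem isPolyhedralCone_nonneg (ι : Type*) [Finite ι] :
    IsPolyhedralCone {c : ι → ℝ | ∀ i, 0 ≤ c i} :=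
  ⟨⊤, Set.range LinearMap.proj, Set.finite_range _, by ext; simp⟩

/-- An injective linear map has a linear left inverse `ψ`, and its image is cut out by
`φ (ψ y) = y` together with `ψ y ∈ P`. -/
theorem IsPolyhedralCone.image {P : Set V} (hP : IsPolyhedralCone P) {φ : V →ₗ[ℝ] V'}
    (hφ : Function.Injective φ) : IsPolyhedralCone (φ '' P) := by
  obtain ⟨ψ, hψ⟩ := φ.exists_leftInverse_of_injective (LinearMap.ker_eq_bot.2 hφ)
  have hψφ : ∀ v, ψ (φ v) = v := LinearMap.congr_fun hψ
  have himage : φ '' P = ↑(LinearMap.ker (φ ∘ₗ ψ - LinearMap.id)) ∩ ψ ⁻¹' P := by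
    ext y
    simp only [Set.mem_image, Set.mem_inter_iff, SetLike.mem_coe, LinearMap.mem_ker,
      LinearMap.sub_apply, LinearMap.comp_apply, LinearMap.id_apply, sub_eq_zero,
      Set.mem_preimage]
    constructor
    · rintro ⟨v, hv, rfl⟩
      simp [hψφ, hv]
    · rintro ⟨hy, hyP⟩
      exact ⟨ψ y, hyP, hy⟩
  rw [himage]
  exact (submodule _).inter (hP.preimage ψ)

theorem IsPolyhedralCone.isCone {P : Set V} (hP : IsPolyhedralCone P) : IsCone P := by
  obtain ⟨L, s, -, rfl⟩ := hP
  rintro c hc v ⟨hvL, hv⟩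
  exact ⟨L.smul_mem c hvL, fun ℓ hℓ => by simpa using mul_nonneg hc (hv ℓ hℓ)⟩

end Polyhedral

section Polyconic

variable {V : Type*} [NormedAddCommGroup V] [NormedSpace ℝ V] [FiniteDimensional ℝ V]

theorem IsPolyhedralCone.isClosed {P : Set V} (hP : IsPolyhedralCone P) : IsClosed P := by
  obtain ⟨L, s, -, rfl⟩ := hP
  rw [Set.ofPred_and]
  refine L.closed_of_finiteDimensional.inter ?_
  simp only [Set.ofPred_forall]
  exact isClosed_iInter fun ℓ => isClosed_iInter fun _ =>
    isClosed_le continuous_const ℓ.continuous_of_finiteDimensional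

/-- At `w`, only the constraints active at `w` survive: the others are strict near `w`. -/
theorem IsPolyhedralCone.exists_isLocalConeAt {P : Set V} (hP : IsPolyhedralCone P) {w : V}
    (hw : w ∈ P) : ∃ T, IsPolyhedralCone T ∧ IsLocalConeAt P w T := by
  obtain ⟨L, s, hs, rfl⟩ := hP
  obtain ⟨hwL, hws⟩ := hw
  have hT : IsPolyhedralCone {v | v ∈ L ∧ ∀ ℓ ∈ {ℓ ∈ s | ℓ w = 0}, 0 ≤ ℓ v} :=
    ⟨L, _, hs.subset (Set.sep_subset _ _), rfl⟩
  refine ⟨_, hT, hT.isCone, ?_⟩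
  have hstrict : ∀ ℓ ∈ s, ∀ᶠ v in 𝓝 (0 : V), ℓ w ≠ 0 → 0 < ℓ w + ℓ v := by
    intro ℓ hℓ
    by_cases hℓw : ℓ w = 0
    · exact Eventually.of_forall fun _ h => absurd hℓw h
    · have hlim : Tendsto (fun v => ℓ w + ℓ v) (𝓝 0) (𝓝 (ℓ w)) := by
        simpa using tendsto_const_nhds.add
          (ℓ.continuous_of_finiteDimensional.tendsto' 0 0 (map_zero _))
      filter_upwards [hlim.eventually_const_lt (lt_of_le_of_ne (hws ℓ hℓ) (Ne.symm hℓw))]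
        with v hv _ using hv
  filter_upwards [hs.eventually_all.2 hstrict] with v hv
  simp only [L.add_mem_iff_right hwL, map_add, and_imp]
  refine and_congr_right fun _ => ⟨fun h ℓ hℓ hℓw => by simpa [hℓw] using h ℓ hℓ, fun h ℓ hℓ => ?_⟩
  by_cases hℓw : ℓ w = 0
  · simpa [hℓw] using h ℓ hℓ hℓw
  · exact (hv ℓ hℓ hℓw).le

def IsPolyconic (K : Set V) : Prop :=
  ∃ S : Set (Set V), S.Finite ∧ (∀ P ∈ S, IsPolyhedralCone P) ∧ K = ⋃₀ S

theorem IsPolyconic.exists_isLocalConeAt {K : Set V} (hK : IsPolyconic K) (p : V) :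
    ∃ T, IsPolyconic T ∧ IsLocalConeAt K p T := by
  obtain ⟨S, hS, hpoly, rfl⟩ := hK
  have hcone : ∀ P ∈ S, p ∈ P → ∃ T, IsPolyhedralCone T ∧ IsLocalConeAt P p T :=
    fun P hP hpP => (hpoly P hP).exists_isLocalConeAt hpP
  choose! T hTpoly hTcone using hcone
  refine ⟨_, ⟨_, (hS.subset (Set.sep_subset _ _)).image T, ?_, rfl⟩,
    IsLocalConeAt.sUnion hS (fun P hP => (hpoly P hP).isClosed) hTcone⟩
  rintro _ ⟨P, ⟨hP, hpP⟩, rfl⟩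
  exact hTpoly P hP hpP

end Polyconic

section SimpleCone

variable {V : Type*} [NormedAddCommGroup V] [InnerProductSpace ℝ V]

theorem coneOf_eq_image (X : Finset V) :
    coneOf X = Fintype.linearCombination ℝ (fun x : X => (x : V)) '' {c | ∀ i, 0 ≤ c i} := by
  ext y
  simp only [coneOf, Set.mem_image, Set.mem_ofPred_eq, Fintype.linearCombination_apply]
  constructor
  · rintro ⟨c, hc, rfl⟩
    exact ⟨fun x => c x, fun x => hc x x.2, Finset.sum_coe_sort X fun v => c v • v⟩
  · rintro ⟨c, hc, rfl⟩
    refine ⟨fun v => if hv : v ∈ X then c ⟨v, hv⟩ else 0, fun v hv => by simpa [hv] using hc _, ?_⟩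
    rw [← Finset.sum_coe_sort X]
    simp

theorem IsSimpleBase.linearIndependent {m : ℕ} {X : Finset V} (h : IsSimpleBase m X) :
    LinearIndependent ℝ (fun x : X => (x : V)) := by
  obtain ⟨-, hnorm, haff⟩ := h
  have hne : ∀ v ∈ (X : Set V), v ≠ 0 := fun v hv h0 => by
    simpa [h0] using hnorm v hv
  refine (linearIndependent_set_iff_affineIndependent_vadd_union_singleton ℝ hne (0 : V)).2 ?_
  convert haff using 3 <;> simp [Set.singleton_union]

theorem isPolyhedralCone_coneOf {X : Finset V}
    (hX : LinearIndependent ℝ (fun x : X => (x : V))) : IsPolyhedralCone (coneOf X) := by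
  rw [coneOf_eq_image]
  exact (isPolyhedralCone_nonneg X).image hX.fintypeLinearCombination_injective

end SimpleCone

section ProdSet

variable {N' N : ℕ}

def proj1ₗ (N' N : ℕ) : EuclideanSpace ℝ (Fin N) →ₗ[ℝ] EuclideanSpace ℝ (Fin N') where
  toFun := proj1 N' N
  map_add' a b := by ext j; simp only [proj1, PiLp.add_apply]; split_ifs <;> simp
  map_smul' c a := by ext j; simp only [proj1, PiLp.smul_apply]; split_ifs <;> simp

theorem isPolyhedralCone_prodSet {A : Set (EuclideanSpace ℝ (Fin N'))} (hA : IsPolyhedralCone A)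
    (m : ℕ) : IsPolyhedralCone (prodSet N' N A m) := by
  have hprod : prodSet N' N A m = proj1ₗ N' N ⁻¹' A ∩
      ↑(⨅ (i : Fin N) (_ : N' + m ≤ (i : ℕ)),
        LinearMap.ker (EuclideanSpace.proj (𝕜 := ℝ) i).toLinearMap) := by
    ext y
    simp [prodSet, proj1ₗ]
  rw [hprod]
  exact (hA.preimage _).inter (.submodule _)

theorem isPolyconic_prodSet {d : ℕ} (T : ComplexCone (EuclideanSpace ℝ (Fin N')) d) (m : ℕ) :
    IsPolyconic (prodSet N' N T.carrier m) := by
  refine ⟨(fun X => prodSet N' N (coneOf X) m) '' T.faces, T.faces.finite_toSet.image _, ?_, ?_⟩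
  · rintro _ ⟨X, hX, rfl⟩
    exact isPolyhedralCone_prodSet (isPolyhedralCone_coneOf (T.simple X hX).linearIndependent) m
  · ext y
    simp only [prodSet, ComplexCone.carrier, Set.sUnion_image, Set.mem_iUnion, Set.mem_ofPred_eq,
      exists_prop]
    exact ⟨fun ⟨⟨X, hX, hy⟩, hzero⟩ => ⟨X, hX, hy, hzero⟩,
      fun ⟨X, hX, hy, hzero⟩ => ⟨⟨X, hX, hy⟩, hzero⟩⟩

end ProdSet

section BlowUpLimits

variable {N : ℕ}

theorem calA_image_subset (R : EuclideanSpace ℝ (Fin N) ≃ᵢ EuclideanSpace ℝ (Fin N))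
    (W : Set (EuclideanSpace ℝ (Fin N))) : calA (R '' W) ⊆ calA W := by
  rintro _ ⟨R', _, ⟨x, hx, rfl⟩, r, hr, hstable, rfl⟩
  set e := R.toRealLinearIsometryEquiv
  refine ⟨e.toIsometryEquiv.trans R', x, hx, r, hr, fun r' hr' hr'r => ?_, ?_⟩
  · have h := hstable r' hr' hr'r
    rw [blowUp_image, blowUp_image] at h
    exact e.injective.image_injective h
  · rw [blowUp_image, ← Set.image_comp]
    rfl

theorem calA_image (R : EuclideanSpace ℝ (Fin N) ≃ᵢ EuclideanSpace ℝ (Fin N))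
    (W : Set (EuclideanSpace ℝ (Fin N))) : calA (R '' W) = calA W := by
  refine (calA_image_subset R W).antisymm ?_
  simpa [Set.image_image] using calA_image_subset R.symm (R '' W)

theorem IsLocalConeAt.image_mem_calA {K T : Set (EuclideanSpace ℝ (Fin N))}
    {p : EuclideanSpace ℝ (Fin N)} (h : IsLocalConeAt K p T) (hp : p ∈ K)
    (R : EuclideanSpace ℝ (Fin N) ≃ᵢ EuclideanSpace ℝ (Fin N)) : R '' T ∈ calA K := by
  obtain ⟨ρ, hρ, hblow⟩ := h.exists_blowUp_eq
  exact ⟨R, p, hp, ρ, hρ, fun r hr hrρ => by rw [hblow r hr hrρ, hblow ρ hρ le_rfl],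
    by rw [hblow ρ hρ le_rfl]⟩

theorem mem_calA_self {W Z : Set (EuclideanSpace ℝ (Fin N))} (hZ : Z ∈ calA W) : Z ∈ calA Z := by
  obtain ⟨R, x, hx, r, hr, -, rfl⟩ := hZ
  rw [calA_image]
  exact (isCone_blowUp W x r).isLocalConeAt_zero.image_mem_calA (zero_mem_blowUp hx hr) R

theorem IsPolyconic.exists_of_mem_calA {K Z : Set (EuclideanSpace ℝ (Fin N))}
    (hK : IsPolyconic K) (hZ : Z ∈ calA K) :
    ∃ x ∈ K, ∃ T, IsPolyconic T ∧ IsLocalConeAt K x T ∧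
      ∃ R : EuclideanSpace ℝ (Fin N) ≃ᵢ EuclideanSpace ℝ (Fin N), Z = R '' T := by
  obtain ⟨R, x, hx, r, hr, hstable, rfl⟩ := hZ
  obtain ⟨T, hT, hKT⟩ := hK.exists_isLocalConeAt x
  exact ⟨x, hx, T, hT, hKT, R, by rw [hKT.blowUp_eq_of_stable hr hstable]⟩

theorem calAB_calA_of_isPolyconic {K : Set (EuclideanSpace ℝ (Fin N))} (hK : IsPolyconic K) :
    calAB (calA K) = calA K := by
  refine Set.Subset.antisymm ?_ fun Z hZ => Set.mem_biUnion hZ (mem_calA_self hZ)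
  refine Set.iUnion₂_subset fun Z hZ Z' hZ' => ?_
  obtain ⟨x, -, T, hT, hKT, R, rfl⟩ := hK.exists_of_mem_calA hZ
  rw [calA_image] at hZ'
  obtain ⟨q, hq, T', -, hTT', R', rfl⟩ := hT.exists_of_mem_calA hZ'
  obtain ⟨y, hKy⟩ := hKT.exists_shift hTT'
  exact hKy.image_mem_calA (hKy.mem_iff.2 (hTT'.mem_iff.1 hq)) R'

end BlowUpLimits

theorem statement3_general
    (n N' N : ℕ)
    (m : ℕ)
    (W : Set (EuclideanSpace ℝ (Fin N))) (hW : IsTypeM n N' N m W) :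
    calAB (calA W) = calA W := by
  obtain ⟨-, C, -, rfl⟩ := hW
  rw [TypedCone.carrier, calA_image]
  exact calAB_calA_of_isPolyconic (isPolyconic_prodSet C.T C.m)

/-- **Proposition 2.12**: completeness of the class of blow-up limits:
`𝒜(𝒜(W)) = 𝒜(W)` for every set `W` of type `m`. -/
theorem statement3
    (n N' N : ℕ) (hn : 0 < n) (hnN' : n < N') (hN'N : N' + n ≤ N)
    (m : ℕ) (hm : m ≤ n)
    (W : Set (EuclideanSpace ℝ (Fin N))) (hW : IsTypeM n N' N m W) :
    calAB (calA W) = calA W :=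
  statement3_general n N' N m W hW

end DDTGen
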